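/- Let m ≥ 8 be an integer, and let M₁ = [[2m,1,0],[m²,0,1],[1,0,0]] and M₂ = [[2m+2,1,0],[(m+1)²,0,1],[1,0,0]]. Then for every nonzero vector x in the cone 𝔠, one has ‖M₁x‖₁ ≥ 1.9m·‖x‖₁ and ‖M₂x‖₁ ≥ 1.9m·‖x‖₁, where ‖·‖₁ denotes the ℓ¹ norm on ℝ³. -/
import Mathlib


open Matrix

noncomputable section

/-- `M₁ = [[2m,1,0],[m²,0,1],[1,0,0]]`, the substitution matrix of
`ζ_m : 0 ↦ 0^{2m} 1^{m²} 2, 1 ↦ 0, 2 ↦ 1`. -/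
def M1 (m : ℤ) : Matrix (Fin 3) (Fin 3) ℝ :=
  !![2 * (m : ℝ), 1, 0; (m : ℝ) ^ 2, 0, 1; 1, 0, 0]

/-- `M₂ = [[2m+2,1,0],[(m+1)²,0,1],[1,0,0]]`, the substitution matrix of `ζ_{m+1}`. -/
def M2 (m : ℤ) : Matrix (Fin 3) (Fin 3) ℝ :=
  !![2 * (m : ℝ) + 2, 1, 0; ((m : ℝ) + 1) ^ 2, 0, 1; 1, 0, 0]

/-- The cone `𝔠`: the zero vector together with all `(x₁,x₂,x₃)` with `x₃ > 0`,
`2.3 m ≤ x₁/x₃ ≤ 2.5 m + 3` and `m² ≤ x₂/x₃ ≤ m² + 2m + 2`. -/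
def cone (m : ℤ) : Set (Fin 3 → ℝ) :=
  {x | x = 0 ∨ (0 < x 2 ∧
    2.3 * (m : ℝ) ≤ x 0 / x 2 ∧ x 0 / x 2 ≤ 2.5 * (m : ℝ) + 3 ∧
    (m : ℝ) ^ 2 ≤ x 1 / x 2 ∧ x 1 / x 2 ≤ (m : ℝ) ^ 2 + 2 * (m : ℝ) + 2)}

/-- The `ℓ¹` norm on `ℝ³`. -/
def l1 (x : Fin 3 → ℝ) : ℝ := |x 0| + |x 1| + |x 2|

set_option maxHeartbeats 1000000 in
/-- For `m ≥ 8`, each of `M₁, M₂` expands the `ℓ¹`-norm of every nonzero vector of the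
cone `𝔠` by a factor at least `1.9 m`. -/
theorem stmt11 (m : ℤ) (hm : 8 ≤ m) (x : Fin 3 → ℝ) (hx : x ∈ cone m) (hx0 : x ≠ 0) :
    1.9 * (m : ℝ) * l1 x ≤ l1 ((M1 m).mulVec x) ∧
    1.9 * (m : ℝ) * l1 x ≤ l1 ((M2 m).mulVec x) := by
  rcases hx with h | ⟨h3, h1l, h1u, h2l, h2u⟩
  · exact absurd h hx0
  have hm' : (8:ℝ) ≤ (m:ℝ) := by exact_mod_cast hm
  have hm0 : (0:ℝ) < (m:ℝ) := by linarith
  have ha : 2.3 * (m:ℝ) * x 2 ≤ x 0 := by nlinarith [(le_div_iff₀ h3).mp h1l]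
  have hau : x 0 ≤ (2.5 * (m:ℝ) + 3) * x 2 := (div_le_iff₀ h3).mp h1u
  have hb : (m:ℝ)^2 * x 2 ≤ x 1 := by nlinarith [(le_div_iff₀ h3).mp h2l]
  have hbu : x 1 ≤ ((m:ℝ)^2 + 2*(m:ℝ) + 2) * x 2 := (div_le_iff₀ h3).mp h2u
  have hx0p : 0 < x 0 := lt_of_lt_of_le (by nlinarith) ha
  have hx1p : 0 < x 1 := lt_of_lt_of_le (by nlinarith) hb
  have e1 : l1 ((M1 m).mulVec x) = (2*(m:ℝ)*x 0 + x 1) + ((m:ℝ)^2 * x 0 + x 2) + x 0 := by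
    simp [l1, M1, mulVec, dotProduct, Fin.sum_univ_three]
    rw [abs_of_pos (by nlinarith), abs_of_pos (by nlinarith), abs_of_pos hx0p]
  have e2 : l1 ((M2 m).mulVec x) = ((2*(m:ℝ)+2)*x 0 + x 1) + (((m:ℝ)+1)^2 * x 0 + x 2) + x 0 := by
    simp [l1, M2, mulVec, dotProduct, Fin.sum_univ_three]
    rw [abs_of_pos (by nlinarith), abs_of_pos (by nlinarith), abs_of_pos hx0p]
  have el : l1 x = x 0 + x 1 + x 2 := by
    simp [l1, abs_of_pos hx0p, abs_of_pos hx1p, abs_of_pos h3]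
  have k1 := mul_le_mul_of_nonneg_left ha (sq_nonneg (m:ℝ))
  have k2 := mul_le_mul_of_nonneg_left hbu (by nlinarith : (0:ℝ) ≤ 1.9 * (m:ℝ) - 1)
  have k3 := mul_le_mul_of_nonneg_left ha hm0.le
  have p1 : (0:ℝ) ≤ (m:ℝ)^2 * ((m:ℝ) - 8) := mul_nonneg (sq_nonneg _) (by linarith)
  have p2 : 8*(m:ℝ) ≤ (m:ℝ)*(m:ℝ) := mul_le_mul_of_nonneg_right hm' hm0.le
  have hp : (0:ℝ) ≤ 0.4*(m:ℝ)^3 - 2.57*(m:ℝ)^2 - 1.4*(m:ℝ) + 3 := by linarith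
  have hq := mul_nonneg hp h3.le
  rw [e1, e2, el]
  have first : 1.9 * (m:ℝ) * (x 0 + x 1 + x 2) ≤
      2*(m:ℝ)*x 0 + x 1 + ((m:ℝ)^2 * x 0 + x 2) + x 0 := by linarith
  have r : (0:ℝ) ≤ (2*(m:ℝ)+1)*x 0 := mul_nonneg (by linarith) hx0p.le
  exact ⟨first, by linarith⟩
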